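/- Convergence Lemma: Let G be a graph with quasi-Laplacian M = I - D⁻¹A, and let p be any vector. For disjoint sets L,R with U = L∪R, let β(L,R) be the bipartiteness ratio. Then pM(L,-R) ≤ J(p, vol(U)(1+β(L,R))) + J(p, vol(U)(1-β(L,R))), where pM(L,-R) = Σ_{v∈L}(pM)(v) - Σ_{v∈R}(pM)(v) and J is the potential function J(p,x) = max{Σ_v |p(v)|w(v) : w∈[0,1]^V, Σ_v w(v)d(v)=x}. -/

import Mathlib

open Finset Matrix

/-!
Write `χ = 𝟙_L - 𝟙_R` and `a_S(u) = ∑_{v ∈ S} A u v`. Then `pM(L,-R) = p ⬝ᵥ c` with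
`c = M χ`, i.e. `c(u) = χ(u) - (a_L(u) - a_R(u)) / d(u)`, so `|c| ≤ 2`. Splitting
`|c| = min(|c|, 1) + (|c| - 1)⁺` into two weightings with values in `[0,1]` gives
`pM(L,-R) ≤ J(p, x) + J(p, y)` as soon as their volumes are at most `x` and `y`. Outside `U`
one has `|c| d = |a_L - a_R| ≤ a_U`, so the first volume is at most `vol(U) + e(U,Ū)`, and the
second weighting vanishes outside `U` and is at most `a_R` on `L` and `a_L` on `R`, so its volume
is at most `2 e(L,R) = vol(U)(1 - β)`.
-/

/-- The Lovász–Simonovits-style potential function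
`J(p,x) = max { Σ_v |p(v)| w(v) : w ∈ [0,1]^V, Σ_v w(v) d(v) = x }`
(extended by `J(p,x) = J(p, vol G)` for `x > vol G`). -/
noncomputable def Jpot {V : Type*} [Fintype V] (d : V → ℝ) (p : V → ℝ) (x : ℝ) : ℝ :=
  sSup {s : ℝ | ∃ w : V → ℝ, (∀ v, 0 ≤ w v ∧ w v ≤ 1)
    ∧ ∑ v, w v * d v = min x (∑ v, d v) ∧ s = ∑ v, |p v| * w v}

section Potential

variable {V : Type*} [Fintype V] {d : V → ℝ}

lemma bddAbove_Jpot_set (p : V → ℝ) (x : ℝ) :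
    BddAbove {s : ℝ | ∃ w : V → ℝ, (∀ v, 0 ≤ w v ∧ w v ≤ 1)
      ∧ ∑ v, w v * d v = min x (∑ v, d v) ∧ s = ∑ v, |p v| * w v} := by
  refine ⟨∑ v, |p v|, ?_⟩
  rintro s ⟨w, hw, -, rfl⟩
  exact Finset.sum_le_sum fun v _ => mul_le_of_le_one_right (abs_nonneg _) (hw v).2

/-- Moving every weight the same fraction `t` of the way towards `1` moves `∑ w d`
affinely in `t` from its current value up to `∑ d`. -/
lemma exists_weight_ge_sum_mul_eq {w : V → ℝ}
    (hw : ∀ v, 0 ≤ w v ∧ w v ≤ 1) {y : ℝ} (hwy : ∑ v, w v * d v ≤ y) (hy : y ≤ ∑ v, d v) :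
    ∃ w' : V → ℝ, (∀ v, 0 ≤ w' v ∧ w' v ≤ 1) ∧ (∀ v, w v ≤ w' v) ∧ ∑ v, w' v * d v = y := by
  rcases (hwy.trans hy).eq_or_lt with hfull | hlt
  · exact ⟨w, hw, fun _ => le_rfl, le_antisymm hwy (hfull ▸ hy)⟩
  set t := (y - ∑ v, w v * d v) / (∑ v, d v - ∑ v, w v * d v)
  have ht0 : 0 ≤ t := div_nonneg (by linarith) (by linarith)
  have ht1 : t ≤ 1 := (div_le_one (by linarith)).2 (by linarith)
  refine ⟨fun v => w v + t * (1 - w v), fun v => ⟨by nlinarith [hw v], by nlinarith [hw v]⟩,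
    fun v => by nlinarith [hw v], ?_⟩
  calc ∑ v, (w v + t * (1 - w v)) * d v
      = ∑ v, w v * d v + t * (∑ v, d v - ∑ v, w v * d v) := by
        rw [← Finset.sum_sub_distrib, Finset.mul_sum, ← Finset.sum_add_distrib]
        exact Finset.sum_congr rfl fun v _ => by ring
    _ = y := by rw [div_mul_cancel₀ _ (by linarith)]; ring

lemma sum_abs_mul_le_Jpot (hd : ∀ v, 0 ≤ d v) (p : V → ℝ) {w : V → ℝ}
    (hw : ∀ v, 0 ≤ w v ∧ w v ≤ 1) {x : ℝ} (hx : ∑ v, w v * d v ≤ x) :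
    ∑ v, |p v| * w v ≤ Jpot d p x := by
  have hwd : ∑ v, w v * d v ≤ ∑ v, d v :=
    Finset.sum_le_sum fun v _ => mul_le_of_le_one_left (hd v) (hw v).2
  obtain ⟨w', hw', hww', hsum⟩ :=
    exists_weight_ge_sum_mul_eq hw (le_min hx hwd) (min_le_right x _)
  calc ∑ v, |p v| * w v ≤ ∑ v, |p v| * w' v :=
        Finset.sum_le_sum fun v _ => mul_le_mul_of_nonneg_left (hww' v) (abs_nonneg _)
    _ ≤ Jpot d p x := le_csSup (bddAbove_Jpot_set p x) ⟨w', hw', hsum, rfl⟩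

lemma sum_mul_le_Jpot_add_Jpot (hd : ∀ v, 0 ≤ d v) (p : V → ℝ) {c : V → ℝ}
    (hc : ∀ v, |c v| ≤ 2) {x y : ℝ} (hx : ∑ v, min |c v| 1 * d v ≤ x)
    (hy : ∑ v, (|c v| - min |c v| 1) * d v ≤ y) :
    ∑ v, p v * c v ≤ Jpot d p x + Jpot d p y := by
  have hw₁ : ∀ v, 0 ≤ min |c v| 1 ∧ min |c v| 1 ≤ 1 := fun v =>
    ⟨le_min (abs_nonneg _) zero_le_one, min_le_right _ _⟩
  have hw₂ : ∀ v, 0 ≤ |c v| - min |c v| 1 ∧ |c v| - min |c v| 1 ≤ 1 := fun v =>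
    ⟨sub_nonneg.2 (min_le_left _ _), by
      rcases min_cases |c v| 1 with ⟨h, -⟩ | ⟨h, -⟩ <;> linarith [hc v]⟩
  calc ∑ v, p v * c v
      ≤ ∑ v, (|p v| * min |c v| 1 + |p v| * (|c v| - min |c v| 1)) :=
        Finset.sum_le_sum fun v _ => by
          rw [← mul_add, add_sub_cancel, ← abs_mul]; exact le_abs_self _
    _ ≤ Jpot d p x + Jpot d p y := by
        rw [Finset.sum_add_distrib]
        exact add_le_add (sum_abs_mul_le_Jpot hd p hw₁ hx) (sum_abs_mul_le_Jpot hd p hw₂ hy)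

end Potential

section Coefficients

variable {a b d : ℝ}

lemma abs_sub_div_mul_le_add (ha : 0 ≤ a) (hb : 0 ≤ b) (hd : 0 < d) :
    |(a - b) / d| * d ≤ a + b := by
  rw [abs_div, abs_of_pos hd, div_mul_cancel₀ _ hd.ne', abs_le]
  constructor <;> linarith

lemma abs_sub_div_le_one (ha : 0 ≤ a) (hb : 0 ≤ b) (had : a + b ≤ d) (hd : 0 < d) :
    |(a - b) / d| ≤ 1 :=
  le_of_mul_le_mul_right (by linarith [abs_sub_div_mul_le_add ha hb hd]) hd

lemma one_sub_div_bounds (ha : 0 ≤ a) (hb : 0 ≤ b) (had : a + b ≤ d) (hd : 0 < d) :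
    |1 - (a - b) / d| ≤ 2 ∧ (|1 - (a - b) / d| - min |1 - (a - b) / d| 1) * d ≤ b := by
  have hq := abs_le.1 (abs_sub_div_le_one ha hb had hd)
  rw [abs_of_nonneg (by linarith)]
  refine ⟨by linarith, ?_⟩
  rcases le_total 0 ((a - b) / d) with hpos | hneg
  · rw [min_eq_left (by linarith), sub_self, zero_mul]; exact hb
  · rw [min_eq_right (by linarith), sub_sub_cancel_left, neg_mul, div_mul_cancel₀ _ hd.ne']
    linarith

end Coefficients

lemma Matrix.IsSymm.sum_sum_comm {V α : Type*} [AddCommMonoid α] {A : Matrix V V α}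
    (hA : A.IsSymm) (S T : Finset V) :
    ∑ u ∈ S, ∑ v ∈ T, A u v = ∑ u ∈ T, ∑ v ∈ S, A u v := by
  refine Finset.sum_comm.trans ?_
  exact Finset.sum_congr rfl fun u _ => Finset.sum_congr rfl fun v _ => hA.apply u v

section RandomWalk

variable {V : Type*} [Fintype V] [DecidableEq V]

def signedIndicator (L R : Finset V) (v : V) : ℝ :=
  (if v ∈ L then 1 else 0) - (if v ∈ R then 1 else 0)

lemma sum_sub_sum_eq_dotProduct_signedIndicator (f : V → ℝ) (L R : Finset V) :
    ∑ v ∈ L, f v - ∑ v ∈ R, f v = f ⬝ᵥ signedIndicator L R := by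
  simp [dotProduct, signedIndicator, mul_sub, Finset.sum_sub_distrib]

lemma mulVec_signedIndicator (A : Matrix V V ℝ) (L R : Finset V) (u : V) :
    (A *ᵥ signedIndicator L R) u = ∑ v ∈ L, A u v - ∑ v ∈ R, A u v :=
  (sum_sub_sum_eq_dotProduct_signedIndicator _ L R).symm

variable {A M : Matrix V V ℝ} {d : V → ℝ}

lemma mulVec_apply_of_eq_one_sub_div (hM : ∀ v u, M v u = (if v = u then 1 else 0) - A v u / d v)
    (x : V → ℝ) (u : V) : (M *ᵥ x) u = x u - (A *ᵥ x) u / d u := by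
  simp [mulVec, dotProduct, hM, sub_mul, Finset.sum_sub_distrib, Finset.sum_div, div_mul_eq_mul_div]

variable {L R : Finset V}

lemma sum_add_sum_le_degree (hA0 : ∀ v u, 0 ≤ A v u) (hd : ∀ v, d v = ∑ u, A v u)
    (hLR : Disjoint L R) (u : V) : ∑ v ∈ L, A u v + ∑ v ∈ R, A u v ≤ d u := by
  rw [hd u, ← Finset.sum_union hLR]
  exact Finset.sum_le_univ_sum_of_nonneg fun v => hA0 u v

lemma mulVec_signedIndicator_of_mem_left
    (hM : ∀ v u, M v u = (if v = u then 1 else 0) - A v u / d v) (hLR : Disjoint L R)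
    {u : V} (hu : u ∈ L) :
    (M *ᵥ signedIndicator L R) u = 1 - (∑ v ∈ L, A u v - ∑ v ∈ R, A u v) / d u := by
  rw [mulVec_apply_of_eq_one_sub_div hM, mulVec_signedIndicator, signedIndicator,
    if_pos hu, if_neg (Finset.disjoint_left.1 hLR hu), sub_zero]

lemma mulVec_signedIndicator_of_mem_right
    (hM : ∀ v u, M v u = (if v = u then 1 else 0) - A v u / d v) (hLR : Disjoint L R)
    {u : V} (hu : u ∈ R) :
    (M *ᵥ signedIndicator L R) u = -(1 - (∑ v ∈ R, A u v - ∑ v ∈ L, A u v) / d u) := by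
  rw [mulVec_apply_of_eq_one_sub_div hM, mulVec_signedIndicator, signedIndicator,
    if_neg (Finset.disjoint_right.1 hLR hu), if_pos hu]
  ring

lemma mulVec_signedIndicator_of_not_mem
    (hM : ∀ v u, M v u = (if v = u then 1 else 0) - A v u / d v) {u : V} (hu : u ∉ L ∪ R) :
    (M *ᵥ signedIndicator L R) u = -((∑ v ∈ L, A u v - ∑ v ∈ R, A u v) / d u) := by
  rw [Finset.mem_union, not_or] at hu
  rw [mulVec_apply_of_eq_one_sub_div hM, mulVec_signedIndicator, signedIndicator,
    if_neg hu.1, if_neg hu.2, sub_self, zero_sub]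

lemma mulVec_signedIndicator_bounds_of_mem_left (hA0 : ∀ v u, 0 ≤ A v u)
    (hd : ∀ v, d v = ∑ u, A v u) (hd0 : ∀ v, 0 < d v)
    (hM : ∀ v u, M v u = (if v = u then 1 else 0) - A v u / d v) (hLR : Disjoint L R)
    {u : V} (hu : u ∈ L) :
    |(M *ᵥ signedIndicator L R) u| ≤ 2 ∧
      (|(M *ᵥ signedIndicator L R) u| - min |(M *ᵥ signedIndicator L R) u| 1) * d u
        ≤ ∑ v ∈ R, A u v := by
  rw [mulVec_signedIndicator_of_mem_left hM hLR hu]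
  exact one_sub_div_bounds (Finset.sum_nonneg fun v _ => hA0 u v)
    (Finset.sum_nonneg fun v _ => hA0 u v)
    (sum_add_sum_le_degree hA0 hd hLR u) (hd0 u)

lemma mulVec_signedIndicator_bounds_of_mem_right (hA0 : ∀ v u, 0 ≤ A v u)
    (hd : ∀ v, d v = ∑ u, A v u) (hd0 : ∀ v, 0 < d v)
    (hM : ∀ v u, M v u = (if v = u then 1 else 0) - A v u / d v) (hLR : Disjoint L R)
    {u : V} (hu : u ∈ R) :
    |(M *ᵥ signedIndicator L R) u| ≤ 2 ∧
      (|(M *ᵥ signedIndicator L R) u| - min |(M *ᵥ signedIndicator L R) u| 1) * d u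
        ≤ ∑ v ∈ L, A u v := by
  rw [mulVec_signedIndicator_of_mem_right hM hLR hu, abs_neg]
  exact one_sub_div_bounds (Finset.sum_nonneg fun v _ => hA0 u v)
    (Finset.sum_nonneg fun v _ => hA0 u v)
    ((add_comm _ _).trans_le (sum_add_sum_le_degree hA0 hd hLR u)) (hd0 u)

lemma mulVec_signedIndicator_bounds_of_not_mem (hA0 : ∀ v u, 0 ≤ A v u)
    (hd : ∀ v, d v = ∑ u, A v u) (hd0 : ∀ v, 0 < d v)
    (hM : ∀ v u, M v u = (if v = u then 1 else 0) - A v u / d v) (hLR : Disjoint L R)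
    {u : V} (hu : u ∉ L ∪ R) :
    |(M *ᵥ signedIndicator L R) u| ≤ 1 ∧
      |(M *ᵥ signedIndicator L R) u| * d u ≤ ∑ v ∈ L ∪ R, A u v := by
  have hL0 : 0 ≤ ∑ v ∈ L, A u v := Finset.sum_nonneg fun v _ => hA0 u v
  have hR0 : 0 ≤ ∑ v ∈ R, A u v := Finset.sum_nonneg fun v _ => hA0 u v
  rw [mulVec_signedIndicator_of_not_mem hM hu, abs_neg, Finset.sum_union hLR]
  exact ⟨abs_sub_div_le_one hL0 hR0 (sum_add_sum_le_degree hA0 hd hLR u) (hd0 u),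
    abs_sub_div_mul_le_add hL0 hR0 (hd0 u)⟩

lemma abs_mulVec_signedIndicator_le_two (hA0 : ∀ v u, 0 ≤ A v u)
    (hd : ∀ v, d v = ∑ u, A v u) (hd0 : ∀ v, 0 < d v)
    (hM : ∀ v u, M v u = (if v = u then 1 else 0) - A v u / d v) (hLR : Disjoint L R) (u : V) :
    |(M *ᵥ signedIndicator L R) u| ≤ 2 := by
  by_cases hu : u ∈ L ∪ R
  · rcases Finset.mem_union.1 hu with hL | hR
    · exact (mulVec_signedIndicator_bounds_of_mem_left hA0 hd hd0 hM hLR hL).1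
    · exact (mulVec_signedIndicator_bounds_of_mem_right hA0 hd hd0 hM hLR hR).1
  · linarith [(mulVec_signedIndicator_bounds_of_not_mem hA0 hd hd0 hM hLR hu).1]

lemma sum_min_abs_mulVec_signedIndicator_mul_le (hA0 : ∀ v u, 0 ≤ A v u)
    (hd : ∀ v, d v = ∑ u, A v u) (hd0 : ∀ v, 0 < d v)
    (hM : ∀ v u, M v u = (if v = u then 1 else 0) - A v u / d v) (hLR : Disjoint L R) :
    ∑ u, min |(M *ᵥ signedIndicator L R) u| 1 * d u
      ≤ ∑ u ∈ L ∪ R, d u + ∑ u ∈ (L ∪ R)ᶜ, ∑ v ∈ L ∪ R, A u v := by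
  rw [← Finset.sum_add_sum_compl (L ∪ R)]
  gcongr with u _ u hu
  · exact mul_le_of_le_one_left (hd0 u).le (min_le_right _ _)
  · exact (mul_le_mul_of_nonneg_right (min_le_left _ _) (hd0 u).le).trans
      (mulVec_signedIndicator_bounds_of_not_mem hA0 hd hd0 hM hLR (Finset.mem_compl.1 hu)).2

lemma sum_excess_mulVec_signedIndicator_mul_le (hA0 : ∀ v u, 0 ≤ A v u)
    (hd : ∀ v, d v = ∑ u, A v u) (hd0 : ∀ v, 0 < d v)
    (hM : ∀ v u, M v u = (if v = u then 1 else 0) - A v u / d v) (hLR : Disjoint L R) :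
    ∑ u, (|(M *ᵥ signedIndicator L R) u| - min |(M *ᵥ signedIndicator L R) u| 1) * d u
      ≤ ∑ u ∈ L, ∑ v ∈ R, A u v + ∑ u ∈ R, ∑ v ∈ L, A u v := by
  have houter : ∀ u ∈ (L ∪ R)ᶜ,
      (|(M *ᵥ signedIndicator L R) u| - min |(M *ᵥ signedIndicator L R) u| 1) * d u = 0 :=
    fun u hu => by
      rw [min_eq_left (mulVec_signedIndicator_bounds_of_not_mem hA0 hd hd0 hM hLR
        (Finset.mem_compl.1 hu)).1, sub_self, zero_mul]
  rw [← Finset.sum_add_sum_compl (L ∪ R), Finset.sum_eq_zero houter, add_zero,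
    Finset.sum_union hLR]
  gcongr with u hu u hu
  · exact (mulVec_signedIndicator_bounds_of_mem_left hA0 hd hd0 hM hLR hu).2
  · exact (mulVec_signedIndicator_bounds_of_mem_right hA0 hd hd0 hM hLR hu).2

lemma sum_degree_union_eq (hd : ∀ v, d v = ∑ u, A v u) (hLR : Disjoint L R) :
    ∑ u ∈ L ∪ R, d u = ∑ u ∈ L, ∑ v ∈ L, A u v + ∑ u ∈ L, ∑ v ∈ R, A u v
      + ∑ u ∈ R, ∑ v ∈ L, A u v + ∑ u ∈ R, ∑ v ∈ R, A u v
      + ∑ u ∈ L ∪ R, ∑ v ∈ (L ∪ R)ᶜ, A u v := by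
  have hsplit (u : V) :
      d u = ∑ v ∈ L, A u v + ∑ v ∈ R, A u v + ∑ v ∈ (L ∪ R)ᶜ, A u v := by
    rw [hd u, ← Finset.sum_union hLR, Finset.sum_add_sum_compl]
  simp only [hsplit, Finset.sum_add_distrib, Finset.sum_union hLR]
  ring

end RandomWalk

/-- Convergence Lemma: for any vector `p` and disjoint `L, R` with `U = L ∪ R`,
`pM(L,-R) ≤ J(p, vol(U)(1+β(L,R))) + J(p, vol(U)(1-β(L,R)))`. -/
theorem convergence_lemma {V : Type*} [Fintype V] [DecidableEq V]
    (A : Matrix V V ℝ) (hA : A.IsSymm) (hA0 : ∀ v u, 0 ≤ A v u)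
    (d : V → ℝ) (hd : ∀ v, d v = ∑ u, A v u) (hd0 : ∀ v, 0 < d v)
    (M : Matrix V V ℝ)
    (hM : ∀ v u, M v u = (if v = u then 1 else 0) - A v u / d v)
    (p : V → ℝ)
    (L R : Finset V) (hLR : Disjoint L R)
    (volU : ℝ) (hvolU : volU = ∑ v ∈ L ∪ R, d v) (hvolU0 : 0 < volU)
    (eL eR eOut : ℝ)
    (heL : eL = (∑ u ∈ L, ∑ v ∈ L, A u v) / 2)
    (heR : eR = (∑ u ∈ R, ∑ v ∈ R, A u v) / 2)
    (heOut : eOut = ∑ u ∈ L ∪ R, ∑ v ∈ (L ∪ R)ᶜ, A u v)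
    (β : ℝ) (hβ : β = (2 * eL + 2 * eR + eOut) / volU) :
    (∑ v ∈ L, (p ᵥ* M) v) - (∑ v ∈ R, (p ᵥ* M) v)
      ≤ Jpot d p (volU * (1 + β)) + Jpot d p (volU * (1 - β)) := by
  have hvolβ : volU * β = 2 * eL + 2 * eR + eOut := by
    rw [hβ, mul_div_cancel₀ _ hvolU0.ne']
  have hvol := sum_degree_union_eq hd hLR
  rw [← hvolU, hA.sum_sum_comm R L] at hvol
  have hout := hA.sum_sum_comm (L ∪ R)ᶜ (L ∪ R)
  have hLL : 0 ≤ ∑ u ∈ L, ∑ v ∈ L, A u v :=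
    Finset.sum_nonneg fun u _ => Finset.sum_nonneg fun v _ => hA0 u v
  have hRR : 0 ≤ ∑ u ∈ R, ∑ v ∈ R, A u v :=
    Finset.sum_nonneg fun u _ => Finset.sum_nonneg fun v _ => hA0 u v
  rw [sum_sub_sum_eq_dotProduct_signedIndicator, ← dotProduct_mulVec]
  refine sum_mul_le_Jpot_add_Jpot (fun v => (hd0 v).le) p
    (abs_mulVec_signedIndicator_le_two hA0 hd hd0 hM hLR)
    ((sum_min_abs_mulVec_signedIndicator_mul_le hA0 hd hd0 hM hLR).trans ?_)
    ((sum_excess_mulVec_signedIndicator_mul_le hA0 hd hd0 hM hLR).trans ?_)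
  · linarith
  · rw [hA.sum_sum_comm R L]; linarith
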